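/- Let λ ∈ ℂ with |λ| > 1. If n is even, then T(H_m(λ), J_n(0)) = ℂ^{n×2m} × ℂ^{2m×n}, i.e., the map (S,R) ↦ (S*·H_m(λ) + J_n(0)·R, R*·J_n(0) + H_m(λ)·S) with S ∈ ℂ^{2m×n}, R ∈ ℂ^{n×2m} is surjective. If n is odd, then for every pair (B,A) ∈ ℂ^{n×2m} × ℂ^{2m×n} there exists exactly one matrix D ∈ ℂ^{n×2m} whose nonzero entries are confined to the first row such that (B − D, A) ∈ T(H_m(λ), J_n(0)); that is, ℂ^{n×2m} × ℂ^{2m×n} = T(H_m(λ), J_n(0)) ⊕_ℝ (V × {0}), where V is the subspace of matrices supported in the first row. -/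

import Mathlib

open Matrix

/-- The `n×n` upper-triangular Jordan block with eigenvalue `l`. -/
noncomputable def Jmat (n : ℕ) (l : ℂ) : Matrix (Fin n) (Fin n) ℂ :=
  Matrix.of fun i j =>
    if (i : ℕ) = (j : ℕ) then l
    else if (j : ℕ) = (i : ℕ) + 1 then 1 else 0

/-- The symmetric matrix `Δ_n`: (1-based) entry `(j,k)` is `1` if `j+k = n+1`,
`i` if `j+k = n+2`, and `0` otherwise. -/
noncomputable def Dmat (n : ℕ) : Matrix (Fin n) (Fin n) ℂ :=
  Matrix.of fun i j =>
    if (i : ℕ) + (j : ℕ) + 1 = n then 1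
    else if (i : ℕ) + (j : ℕ) = n then Complex.I
    else 0

/-- The `2m×2m` block matrix `H_m(l) = [[0, I],[J_m(l), 0]]`. -/
noncomputable def Hmat (m : ℕ) (l : ℂ) : Matrix (Fin m ⊕ Fin m) (Fin m ⊕ Fin m) ℂ :=
  Matrix.fromBlocks 0 1 (Jmat m l) 0

/-- `T(A) = {CᴴA + AC}`, the tangent space to the *congruence class of `A`. -/
def Tset {n : Type*} [Fintype n] (A : Matrix n n ℂ) : Set (Matrix n n ℂ) :=
  {X | ∃ C : Matrix n n ℂ, X = Cᴴ * A + A * C}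

/-- `T(M,N) = {(SᴴM + NR, RᴴN + MS)}`. -/
def Tpair {p q : Type*} [Fintype p] [Fintype q]
    (M : Matrix p p ℂ) (N : Matrix q q ℂ) :
    Set (Matrix q p ℂ × Matrix p q ℂ) :=
  {X | ∃ (S : Matrix p q ℂ) (R : Matrix q p ℂ),
      X = (Sᴴ * M + N * R, Rᴴ * N + M * S)}

/-!
Eliminating `S = H⁻¹ (A - Rᴴ N)` from the second equation, `(B, A) ∈ T(H, N)` becomes the
solvability of `N R - Nᴴ R K = B - Aᴴ K` in `R`, where `K = H⁻ᴴ H` is invertible. For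
`N = J_n(0)`, row `i` of this equation reads `r_{i+1} - r_{i-1} K = c_i` (with `r_{-1} = r_n = 0`):
a second-order recurrence that determines `R` from its first row `r_0`, subject to the single
constraint `r_n = 0`. The part of `r_n` depending on `r_0` is `r_0 K^{n/2}` when `n` is even,
so `r_0` can be chosen to kill `r_n`. When `n` is odd, `r_n` does not depend on `r_0`, and
subtracting `d` from the first row of `B` changes `r_n` by `-d K^{(n-1)/2}`; this fixes `d`.
-/

theorem mem_Tpair_iff_exists {p q : Type*} [Fintype p] [DecidableEq p] [Fintype q]
    {H : Matrix p p ℂ} (hH : IsUnit H.det) (N : Matrix q q ℂ) (B : Matrix q p ℂ)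
    (A : Matrix p q ℂ) :
    (B, A) ∈ Tpair H N ↔
      ∃ R : Matrix q p ℂ, N * R - Nᴴ * R * (Hᴴ⁻¹ * H) = B - Aᴴ * (Hᴴ⁻¹ * H) := by
  have hHK : Hᴴ * (Hᴴ⁻¹ * H) = H := by
    rw [← Matrix.mul_assoc, mul_nonsing_inv _ (by rw [det_conjTranspose]; exact hH.star),
      Matrix.one_mul]
  constructor
  · rintro ⟨S, R, h⟩
    obtain ⟨rfl, rfl⟩ := Prod.mk.inj h
    refine ⟨R, ?_⟩
    simp only [conjTranspose_add, conjTranspose_mul, conjTranspose_conjTranspose,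
      Matrix.add_mul, Matrix.mul_assoc, hHK]
    abel
  · rintro ⟨R, hR⟩
    refine ⟨H⁻¹ * (A - Rᴴ * N), R, Prod.ext ?_ ?_⟩
    · rw [conjTranspose_mul, conjTranspose_nonsing_inv, conjTranspose_sub, conjTranspose_mul,
        conjTranspose_conjTranspose, Matrix.mul_assoc, Matrix.sub_mul]
      dsimp only
      rw [sub_add, ← neg_sub (N * R), hR]
      abel
    · rw [← Matrix.mul_assoc, mul_nonsing_inv _ hH, Matrix.one_mul]
      exact (add_sub_cancel _ _).symm

section Recurrence

variable {α 𝕜 : Type*} [Fintype α] [Semiring 𝕜]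

def rowRec (K : Matrix α α 𝕜) (c : ℕ → α → 𝕜) (x : α → 𝕜) : ℕ → α → 𝕜
  | 0 => 0
  | 1 => x
  | i + 2 => rowRec K c x i ᵥ* K + c i

variable (K : Matrix α α 𝕜)

theorem rowRec_add (c c' : ℕ → α → 𝕜) (x x' : α → 𝕜) :
    rowRec K (c + c') (x + x') = rowRec K c x + rowRec K c' x' := by
  funext i
  induction i using Nat.twoStepInduction with
  | zero => simp [rowRec]
  | one => rfl
  | more i ih _ =>
    simp only [rowRec, ih, Pi.add_apply, add_vecMul]
    abel

theorem rowRec_eq_add (c : ℕ → α → 𝕜) (x : α → 𝕜) :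
    rowRec K c x = rowRec K c 0 + rowRec K 0 x := by
  simpa using rowRec_add K c 0 0 x

theorem rowRec_zero_two_mul (x : α → 𝕜) (k : ℕ) : rowRec K 0 x (2 * k) = 0 := by
  induction k with
  | zero => rfl
  | succ k ih => simp [Nat.mul_succ, rowRec, ih]

theorem rowRec_zero_two_mul_add_one [DecidableEq α] (x : α → 𝕜) (k : ℕ) :
    rowRec K 0 x (2 * k + 1) = x ᵥ* K ^ k := by
  induction k with
  | zero => simp [rowRec]
  | succ k ih => simp [Nat.mul_succ, rowRec, ih, vecMul_vecMul, pow_succ]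

theorem rowRec_two_mul_add_two_of_eq_zero [DecidableEq α] {c : ℕ → α → 𝕜}
    (hc : ∀ i, 0 < i → c i = 0) (k : ℕ) :
    rowRec K c 0 (2 * k + 2) = c 0 ᵥ* K ^ k := by
  induction k with
  | zero => simp [rowRec]
  | succ k ih => simp [Nat.mul_succ, rowRec, ih, vecMul_vecMul, pow_succ, hc]

theorem eq_rowRec_of_recurrence {c s : ℕ → α → 𝕜} {N : ℕ} (h0 : s 0 = 0)
    (hs : ∀ i, i + 2 ≤ N → s (i + 2) = s i ᵥ* K + c i) :
    ∀ i ≤ N, s i = rowRec K c (s 1) i := by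
  intro i
  induction i using Nat.twoStepInduction with
  | zero => exact fun _ => h0
  | one => exact fun _ => rfl
  | more i ih _ =>
    intro hi
    rw [hs i hi, ih (by omega)]
    rfl

end Recurrence

theorem Fin.sum_ite_val_eq {M : Type*} [AddCommMonoid M] {n : ℕ} (f : Fin n → M) (k : ℕ) :
    ∑ j : Fin n, (if (j : ℕ) = k then f j else 0) = if h : k < n then f ⟨k, h⟩ else 0 := by
  split_ifs with h
  · rw [Fintype.sum_eq_single ⟨k, h⟩ fun j hj => if_neg fun e => hj (Fin.ext e), if_pos rfl]
  · exact Finset.sum_eq_zero fun j _ => if_neg (by omega)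

section JordanShift

variable {α 𝕜 : Type*} {n : ℕ}

def padRows [Zero 𝕜] (R : Matrix (Fin n) α 𝕜) (i : ℕ) : α → 𝕜 :=
  if h : i < n then R ⟨i, h⟩ else 0

/-- `extendRows R (i + 1)` is row `i` of `R`; the zero rows at `0` and `n + 1` play the roles
of `r_{-1}` and `r_n`. -/
def extendRows [Zero 𝕜] (R : Matrix (Fin n) α 𝕜) : ℕ → α → 𝕜
  | 0 => 0
  | i + 1 => padRows R i

theorem padRows_add [AddZeroClass 𝕜] (R R' : Matrix (Fin n) α 𝕜) :
    padRows (R + R') = padRows R + padRows R' := by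
  funext i
  by_cases h : i < n
  · simp only [padRows, Pi.add_apply, dif_pos h]
    rfl
  · simp [padRows, h]

theorem Jmat_zero_apply (i j : Fin n) : Jmat n 0 i j = if (j : ℕ) = i + 1 then 1 else 0 := by
  simp only [Jmat, of_apply]
  split_ifs <;> first | rfl | omega

theorem Jmat_zero_mul_row (R : Matrix (Fin n) α ℂ) (i : Fin n) :
    (Jmat n 0 * R) i = padRows R (i + 1) := by
  ext c
  simp only [mul_apply, Jmat_zero_apply, ite_mul, one_mul, zero_mul, Fin.sum_ite_val_eq, padRows]
  split_ifs <;> rfl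

theorem conjTranspose_Jmat_zero_mul_row (R : Matrix (Fin n) α ℂ) (i : Fin n) :
    ((Jmat n 0)ᴴ * R) i = extendRows R i := by
  ext c
  obtain ⟨_ | k, hk⟩ := i
  · simp [mul_apply, Jmat_zero_apply, extendRows]
  · simp only [mul_apply, conjTranspose_apply, Jmat_zero_apply, Nat.add_right_cancel_iff,
      apply_ite star, star_one, star_zero, ite_mul, one_mul, zero_mul]
    simp_rw [eq_comm (a := k), Fin.sum_ite_val_eq]
    simp only [extendRows, padRows]
    split_ifs <;> rfl

theorem Jmat_zero_mul_sub_row [Fintype α] (K : Matrix α α ℂ) (R : Matrix (Fin n) α ℂ)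
    (i : Fin n) :
    (Jmat n 0 * R - (Jmat n 0)ᴴ * R * K) i = extendRows R (i + 2) - extendRows R i ᵥ* K := by
  change (Jmat n 0 * R) i - ((Jmat n 0)ᴴ * R * K) i = _
  rw [mul_apply_eq_vecMul _ K, Jmat_zero_mul_row, conjTranspose_Jmat_zero_mul_row]
  rfl

theorem exists_Jmat_zero_mul_sub_eq_iff [Fintype α] (K : Matrix α α ℂ)
    (C : Matrix (Fin n) α ℂ) :
    (∃ R : Matrix (Fin n) α ℂ, Jmat n 0 * R - (Jmat n 0)ᴴ * R * K = C) ↔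
      ∃ x, rowRec K (padRows C) x (n + 1) = 0 := by
  constructor
  · rintro ⟨R, rfl⟩
    refine ⟨extendRows R 1, ?_⟩
    have hrec : ∀ i, i + 2 ≤ n + 1 → extendRows R (i + 2) =
        extendRows R i ᵥ* K + padRows (Jmat n 0 * R - (Jmat n 0)ᴴ * R * K) i := by
      intro i hi
      rw [padRows, dif_pos (by omega), Jmat_zero_mul_sub_row]
      abel
    rw [← eq_rowRec_of_recurrence K rfl hrec (n + 1) le_rfl]
    simp [extendRows, padRows]
  · rintro ⟨x, hx⟩
    refine ⟨of fun i => rowRec K (padRows C) x (i + 1), ?_⟩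
    have hext : ∀ i ≤ n + 1, extendRows (of fun i : Fin n => rowRec K (padRows C) x (i + 1)) i =
        rowRec K (padRows C) x i := by
      rintro (_ | i) hi
      · rfl
      · by_cases h : i < n
        · simp only [extendRows, padRows, dif_pos h]
          rfl
        · obtain rfl : i = n := by omega
          simp [extendRows, padRows, hx]
    ext1 i
    rw [Jmat_zero_mul_sub_row, hext _ (by omega), hext _ (by omega), rowRec, padRows, dif_pos i.2]
    simp

end JordanShift

section Tangent

variable {α : Type*} [Fintype α] [DecidableEq α] {H : Matrix α α ℂ}

theorem isUnit_conjTranspose_inv_mul (hH : IsUnit H.det) : IsUnit (Hᴴ⁻¹ * H) := by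
  rw [isUnit_iff_isUnit_det, det_mul]
  exact (isUnit_nonsing_inv_det _ (by rw [det_conjTranspose]; exact hH.star)).mul hH

theorem mem_Tpair_Jmat_zero_iff (hH : IsUnit H.det) {n : ℕ} (B : Matrix (Fin n) α ℂ)
    (A : Matrix α (Fin n) ℂ) :
    (B, A) ∈ Tpair H (Jmat n 0) ↔
      ∃ x, rowRec (Hᴴ⁻¹ * H) (padRows (B - Aᴴ * (Hᴴ⁻¹ * H))) x (n + 1) = 0 :=
  (mem_Tpair_iff_exists hH _ B A).trans (exists_Jmat_zero_mul_sub_eq_iff _ _)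

theorem mem_Tpair_Jmat_zero_two_mul (hH : IsUnit H.det) (j : ℕ) (B : Matrix (Fin (2 * j)) α ℂ)
    (A : Matrix α (Fin (2 * j)) ℂ) : (B, A) ∈ Tpair H (Jmat (2 * j) 0) := by
  have hK := isUnit_conjTranspose_inv_mul hH
  rw [mem_Tpair_Jmat_zero_iff hH]
  generalize Hᴴ⁻¹ * H = K at hK ⊢
  obtain ⟨x, hx⟩ : ∃ x, x ᵥ* K ^ j = -rowRec K (padRows (B - Aᴴ * K)) 0 (2 * j + 1) :=
    vecMul_surjective_iff_isUnit.mpr (hK.pow j) _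
  refine ⟨x, ?_⟩
  rw [rowRec_eq_add, Pi.add_apply, rowRec_zero_two_mul_add_one, hx, add_neg_cancel]

theorem sub_mem_Tpair_Jmat_zero_iff (hH : IsUnit H.det) (j : ℕ)
    (B D : Matrix (Fin (2 * j + 1)) α ℂ) (A : Matrix α (Fin (2 * j + 1)) ℂ)
    (hD : ∀ p q, D p q ≠ 0 → (p : ℕ) = 0) :
    (B - D, A) ∈ Tpair H (Jmat (2 * j + 1) 0) ↔
      D 0 ᵥ* (Hᴴ⁻¹ * H) ^ j =
        rowRec (Hᴴ⁻¹ * H) (padRows (B - Aᴴ * (Hᴴ⁻¹ * H))) 0 (2 * j + 2) := by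
  rw [mem_Tpair_Jmat_zero_iff hH]
  generalize Hᴴ⁻¹ * H = K
  have hsplit : rowRec K (padRows (B - Aᴴ * K)) 0 =
      rowRec K (padRows (B - D - Aᴴ * K)) 0 + rowRec K (padRows D) 0 := by
    rw [← rowRec_add, ← padRows_add, add_zero, sub_right_comm, sub_add_cancel]
  have hD0 : rowRec K (padRows D) 0 (2 * j + 2) = D 0 ᵥ* K ^ j := by
    refine rowRec_two_mul_add_two_of_eq_zero K (fun i hi => ?_) j
    unfold padRows
    split_ifs with h
    · ext q
      by_contra hq
      exact hi.ne' (hD _ q hq)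
    · rfl
  have hx : ∀ x, rowRec K (padRows (B - D - Aᴴ * K)) x (2 * j + 1 + 1) =
      rowRec K (padRows (B - D - Aᴴ * K)) 0 (2 * j + 2) := fun x => by
    rw [rowRec_eq_add, Pi.add_apply, show 2 * j + 1 + 1 = 2 * (j + 1) by ring,
      rowRec_zero_two_mul, add_zero]
  rw [hsplit, Pi.add_apply, hD0]
  simp only [hx, exists_const]
  rw [eq_comm (b := _ + _), add_eq_right, eq_comm]

theorem existsUnique_sub_mem_Tpair_Jmat_zero (hH : IsUnit H.det) (j : ℕ)
    (B : Matrix (Fin (2 * j + 1)) α ℂ) (A : Matrix α (Fin (2 * j + 1)) ℂ) :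
    ∃! D : Matrix (Fin (2 * j + 1)) α ℂ,
      (∀ p q, D p q ≠ 0 → (p : ℕ) = 0) ∧ (B - D, A) ∈ Tpair H (Jmat (2 * j + 1) 0) := by
  have hKj : IsUnit ((Hᴴ⁻¹ * H) ^ j) := (isUnit_conjTranspose_inv_mul hH).pow j
  obtain ⟨v, hv⟩ : ∃ v, v ᵥ* (Hᴴ⁻¹ * H) ^ j =
      rowRec (Hᴴ⁻¹ * H) (padRows (B - Aᴴ * (Hᴴ⁻¹ * H))) 0 (2 * j + 2) :=
    vecMul_surjective_iff_isUnit.mpr hKj _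
  have hsupp :
      ∀ p q, updateRow (0 : Matrix (Fin (2 * j + 1)) α ℂ) 0 v p q ≠ 0 → (p : ℕ) = 0 := by
    intro p q hpq
    by_contra hp
    exact hpq (by simp [updateRow_apply, Fin.ext_iff, hp])
  refine ⟨updateRow 0 0 v, ⟨hsupp, (sub_mem_Tpair_Jmat_zero_iff hH j B _ A hsupp).mpr ?_⟩,
    ?_⟩
  · rwa [updateRow_self]
  · rintro D ⟨hD, hmem⟩
    have hD0 : D 0 = v := vecMul_injective_of_isUnit hKj
      (((sub_mem_Tpair_Jmat_zero_iff hH j B D A hD).mp hmem).trans hv.symm)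
    ext p q
    by_cases hp : p = 0
    · simp [hp, ← hD0]
    · rw [updateRow_ne hp, Matrix.zero_apply]
      by_contra hpq
      exact hp (Fin.ext (hD p q hpq))

end Tangent

theorem det_Jmat (k : ℕ) (l : ℂ) : (Jmat k l).det = l ^ k := by
  rw [det_of_isUpperTriangular]
  · simp [Jmat]
  · intro i j (hji : j < i)
    rw [Fin.lt_def] at hji
    simp only [Jmat, of_apply]
    rw [if_neg (by omega), if_neg (by omega)]

theorem Hmat_mul_self (m : ℕ) (l : ℂ) :
    Hmat m l * Hmat m l = fromBlocks (Jmat m l) 0 0 (Jmat m l) := by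
  simp [Hmat, fromBlocks_multiply]

theorem isUnit_det_Hmat (m : ℕ) {l : ℂ} (hl : l ≠ 0) : IsUnit (Hmat m l).det := by
  refine isUnit_of_mul_isUnit_left (y := (Hmat m l).det) ?_
  rw [← det_mul, Hmat_mul_self, det_fromBlocks_zero₂₁, det_Jmat]
  exact (IsUnit.mk0 _ (pow_ne_zero m hl)).mul (IsUnit.mk0 _ (pow_ne_zero m hl))


/-- For `|λ| > 1`: if `n` is even then `T(H_m(λ), J_n(0)) = ℂ^{n×2m} × ℂ^{2m×n}`;
if `n` is odd then `ℂ^{n×2m} × ℂ^{2m×n} = T(H_m(λ), J_n(0)) ⊕_ℝ (V × {0})`, where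
`V` consists of the matrices supported in the first row. -/
theorem stmt18 (m n : ℕ) (l : ℂ) (hl : 1 < ‖l‖) :
    (n % 2 = 0 →
      ∀ (B : Matrix (Fin n) (Fin m ⊕ Fin m) ℂ)
        (A : Matrix (Fin m ⊕ Fin m) (Fin n) ℂ),
        ∃ (S : Matrix (Fin m ⊕ Fin m) (Fin n) ℂ)
          (R : Matrix (Fin n) (Fin m ⊕ Fin m) ℂ),
          B = Sᴴ * Hmat m l + Jmat n 0 * R ∧
          A = Rᴴ * Jmat n 0 + Hmat m l * S) ∧
    (n % 2 = 1 →
      ∀ (B : Matrix (Fin n) (Fin m ⊕ Fin m) ℂ)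
        (A : Matrix (Fin m ⊕ Fin m) (Fin n) ℂ),
        ∃! D : Matrix (Fin n) (Fin m ⊕ Fin m) ℂ,
          (∀ (p : Fin n) (q : Fin m ⊕ Fin m), D p q ≠ 0 → (p : ℕ) = 0) ∧
          (B - D, A) ∈ Tpair (Hmat m l) (Jmat n 0)) := by
  have hH : IsUnit (Hmat m l).det := isUnit_det_Hmat m (norm_pos_iff.mp (one_pos.trans hl))
  refine ⟨fun hn B A => ?_, fun hn B A => ?_⟩
  · obtain ⟨j, rfl⟩ : ∃ j, n = 2 * j := ⟨n / 2, by omega⟩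
    obtain ⟨S, R, h⟩ := mem_Tpair_Jmat_zero_two_mul hH j B A
    exact ⟨S, R, Prod.mk.inj h⟩
  · obtain ⟨j, rfl⟩ : ∃ j, n = 2 * j + 1 := ⟨n / 2, by omega⟩
    exact existsUnique_sub_mem_Tpair_Jmat_zero hH j B A
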